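/- arXiv:1410.7187 — 3 statements merged into one kernel-verified Lean document; each statement's English description precedes it below -/
import Mathlib

section
/- Let B ⊂ ℝⁿ be compact and J : B → ℝ bounded and upper semi-continuous. Then there exists a sequence of polynomials (p_k) ⊂ ℝ[x] such that p_k(x) ≥ J(x) for all x ∈ B and ∫_B |p_k(x) − J(x)| dx → 0 as k → ∞. -/
/-!
Replace `J` by the sup-convolutions `F_k x = sup_{y ∈ B} (J y - k dist(x, y))`: they are
`k`-Lipschitz, lie above `J` on `B`, and converge to `J` pointwise on `B` because `J` is upper
semicontinuous. Stone–Weierstrass gives polynomials within `1/(k+1)` of `F_k + 1/(k+1)`,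
hence squeezed between `F_k` and `F_k + 2/(k+1)`. These majorize `J`, converge to `J` pointwise
on `B` and stay uniformly bounded, so dominated convergence on the finite-measure set `B` gives
`∫_B |p_k - J| → 0`.
-/

open MeasureTheory Set Filter Topology
open scoped NNReal ENNReal

section LipschitzUpperEnvelope

variable {X : Type*} [PseudoMetricSpace X]

noncomputable def lipschitzUpperEnvelope (s : Set X) (f : X → ℝ) (K : ℝ≥0) (x : X) : ℝ :=
  ⨆ y : s, (f y - K * dist x y)

variable {s : Set X} {f : X → ℝ} {M : ℝ}

theorem sub_mul_dist_le (hM : ∀ y ∈ s, f y ≤ M) (K : ℝ≥0) (x : X) (y : s) :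
    f y - K * dist x y ≤ M := by
  have := mul_nonneg K.coe_nonneg (dist_nonneg (x := x) (y := y))
  linarith [hM y y.2]

theorem bddAbove_range_sub_mul_dist (hM : ∀ y ∈ s, f y ≤ M) (K : ℝ≥0) (x : X) :
    BddAbove (range fun y : s => f y - K * dist x y) :=
  ⟨M, forall_mem_range.2 (sub_mul_dist_le hM K x)⟩

theorem le_lipschitzUpperEnvelope (hM : ∀ y ∈ s, f y ≤ M) (K : ℝ≥0) {x : X} (hx : x ∈ s) :
    f x ≤ lipschitzUpperEnvelope s f K x :=
  le_ciSup_of_le (bddAbove_range_sub_mul_dist hM K x) ⟨x, hx⟩ (by simp)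

theorem lipschitzUpperEnvelope_le [Nonempty s] (hM : ∀ y ∈ s, f y ≤ M) (K : ℝ≥0) (x : X) :
    lipschitzUpperEnvelope s f K x ≤ M :=
  ciSup_le (sub_mul_dist_le hM K x)

theorem lipschitzWith_lipschitzUpperEnvelope (hM : ∀ y ∈ s, f y ≤ M) (K : ℝ≥0) :
    LipschitzWith K (lipschitzUpperEnvelope s f K) := by
  rcases isEmpty_or_nonempty s with hs | hs
  · have (x : X) : lipschitzUpperEnvelope s f K x = 0 := by simp [lipschitzUpperEnvelope]
    simpa [funext this] using LipschitzWith.const' (0 : ℝ)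
  refine LipschitzWith.of_le_add_mul K fun x x' => ciSup_le fun y => ?_
  have hle : f y - K * dist x' y ≤ lipschitzUpperEnvelope s f K x' :=
    le_ciSup (bddAbove_range_sub_mul_dist hM K x') y
  have htri := mul_le_mul_of_nonneg_left (dist_triangle x' x y) K.coe_nonneg
  rw [dist_comm x' x] at htri
  linarith

theorem tendsto_lipschitzUpperEnvelope (hM : ∀ y ∈ s, f y ≤ M) {x : X} (hx : x ∈ s)
    (hf : UpperSemicontinuousWithinAt f s x) :
    Tendsto (fun k : ℕ => lipschitzUpperEnvelope s f k x) atTop (𝓝 (f x)) := by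
  have : Nonempty s := ⟨⟨x, hx⟩⟩
  refine tendsto_order.2 ⟨fun a ha => Eventually.of_forall fun k =>
    ha.trans_le (le_lipschitzUpperEnvelope hM k hx), fun b hb => ?_⟩
  obtain ⟨c, hxc, hcb⟩ := exists_between hb
  obtain ⟨δ, hδ, hball⟩ := Metric.mem_nhdsWithin_iff.1 (hf c hxc)
  filter_upwards [tendsto_natCast_atTop_atTop.eventually_ge_atTop ((M - c) / δ)] with k hk
  refine lt_of_le_of_lt (ciSup_le fun y => ?_) hcb
  have hk0 : (0 : ℝ) ≤ k := k.cast_nonneg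
  -- near `x` the values of `f` are below `c`; far from it the penalty `k * dist` beats `M - c`
  rcases lt_or_ge (dist (y : X) x) δ with hnear | hfar
  · have : f y < c := hball ⟨Metric.mem_ball.2 hnear, y.2⟩
    have := mul_nonneg hk0 (dist_nonneg (x := x) (y := y))
    simp only [NNReal.coe_natCast]
    linarith
  · have hkδ : M - c ≤ k * δ := (div_le_iff₀ hδ).1 hk
    have := mul_le_mul_of_nonneg_left (dist_comm (y : X) x ▸ hfar) hk0
    simp only [NNReal.coe_natCast]
    linarith [hM y y.2]

end LipschitzUpperEnvelope

theorem MvPolynomial.exists_abs_eval_sub_lt_of_continuousOn {ι : Type*} {s : Set (ι → ℝ)}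
    (hs : IsCompact s) {f : (ι → ℝ) → ℝ} (hf : ContinuousOn f s) {ε : ℝ} (hε : 0 < ε) :
    ∃ p : MvPolynomial ι ℝ, ∀ x ∈ s, |eval x p - f x| < ε := by
  have : CompactSpace s := isCompact_iff_compactSpace.mp hs
  let φ : MvPolynomial ι ℝ →ₐ[ℝ] C(s, ℝ) :=
    aeval fun i => ⟨fun x : s => (x : ι → ℝ) i, (continuous_apply i).comp continuous_subtype_val⟩
  have hφ (p : MvPolynomial ι ℝ) (x : s) : φ p x = eval (x : ι → ℝ) p := by
    change ContinuousMap.evalAlgHom ℝ ℝ x (aeval _ p) = _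
    rw [comp_aeval_apply]
    exact RingHom.congr_fun (coe_aeval_eq_eval _) p
  have hsep : φ.range.SeparatesPoints := by
    intro x y hxy
    obtain ⟨i, hi⟩ := Function.ne_iff.1 (Subtype.coe_injective.ne hxy)
    exact ⟨_, ⟨φ (X i), ⟨X i, rfl⟩, rfl⟩, by simpa [hφ] using hi⟩
  obtain ⟨⟨_, p, rfl⟩, hp⟩ := ContinuousMap.exists_mem_subalgebra_near_continuous_of_separatesPoints
    φ.range hsep (s.domRestrict f) hf.domRestrict ε hε
  exact ⟨p, fun x hx => by simpa [hφ, Real.norm_eq_abs] using hp ⟨x, hx⟩⟩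

theorem MvPolynomial.exists_ge_tendsto_of_upperSemicontinuousOn {ι : Type*} [Fintype ι]
    {s : Set (ι → ℝ)} (hs : IsCompact s) {f : (ι → ℝ) → ℝ} (hf : UpperSemicontinuousOn f s)
    {M : ℝ} (hM : ∀ x ∈ s, f x ≤ M) :
    ∃ p : ℕ → MvPolynomial ι ℝ, (∀ k, ∀ x ∈ s, f x ≤ eval x (p k) ∧ eval x (p k) ≤ M + 2) ∧
      ∀ x ∈ s, Tendsto (fun k => eval x (p k)) atTop (𝓝 (f x)) := by
  let F (k : ℕ) : (ι → ℝ) → ℝ := lipschitzUpperEnvelope s f k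
  choose p hp using fun k : ℕ => exists_abs_eval_sub_lt_of_continuousOn hs
    (f := fun x => F k x + 1 / (k + 1))
    ((lipschitzWith_lipschitzUpperEnvelope hM k).continuous.add continuous_const).continuousOn
    (Nat.one_div_pos_of_nat (n := k))
  have hsqueeze (k : ℕ) (x) (hx : x ∈ s) : F k x ≤ eval x (p k) ∧
      eval x (p k) ≤ F k x + 2 * (1 / (k + 1)) := by
    obtain ⟨hlo, hhi⟩ := abs_lt.1 (hp k x hx)
    constructor <;> linarith
  refine ⟨p, fun k x hx => ⟨?_, ?_⟩, fun x hx => ?_⟩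
  · exact (le_lipschitzUpperEnvelope hM k hx).trans (hsqueeze k x hx).1
  · have : Nonempty s := ⟨⟨x, hx⟩⟩
    have hgap : 2 * (1 / ((k : ℝ) + 1)) ≤ 2 :=
      mul_le_of_le_one_right zero_le_two (div_le_one_of_le₀ (by simp) (by positivity))
    linarith [(hsqueeze k x hx).2, lipschitzUpperEnvelope_le hM (k : ℝ≥0) x]
  · have hF := tendsto_lipschitzUpperEnvelope hM hx (hf x hx)
    have hgap := (tendsto_one_div_add_atTop_nhds_zero_nat (𝕜 := ℝ)).const_mul 2
    rw [mul_zero] at hgap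
    exact tendsto_of_tendsto_of_tendsto_of_le_of_le hF (by simpa using hF.add hgap)
      (fun k => (hsqueeze k x hx).1) (fun k => (hsqueeze k x hx).2)

theorem tendsto_setIntegral_abs_sub_of_tendsto {X : Type*} [MeasurableSpace X] {μ : Measure X}
    {s : Set X} (hs : MeasurableSet s) (hμs : μ s ≠ ∞) {g : ℕ → X → ℝ} {f : X → ℝ} {C : ℝ}
    (hg : ∀ k, AEStronglyMeasurable (g k) (μ.restrict s))
    (hC : ∀ k, ∀ x ∈ s, |g k x - f x| ≤ C)
    (hlim : ∀ x ∈ s, Tendsto (fun k => g k x) atTop (𝓝 (f x))) :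
    Tendsto (fun k => ∫ x in s, |g k x - f x| ∂μ) atTop (𝓝 0) := by
  have := isFiniteMeasure_restrict.2 hμs
  have hlim' : ∀ᵐ x ∂μ.restrict s, Tendsto (fun k => g k x) atTop (𝓝 (f x)) :=
    (ae_restrict_iff' hs).2 (Eventually.of_forall hlim)
  have hf : AEStronglyMeasurable f (μ.restrict s) := aestronglyMeasurable_of_tendsto_ae _ hg hlim'
  have hdom := tendsto_integral_of_dominated_convergence (F := fun k x => |g k x - f x|)
    (f := fun _ => 0) (fun _ => C) (fun k => ((hg k).sub hf).norm) (integrable_const C)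
    (fun k => (ae_restrict_iff' hs).2 (Eventually.of_forall fun x hx => by simpa using hC k x hx))
    (hlim'.mono fun x hx => by simpa using (hx.sub_const (f x)).abs)
  simpa using hdom

theorem stmt_1_general {n : ℕ} (B : Set (Fin n → ℝ)) (hB : IsCompact B)
    (J : (Fin n → ℝ) → ℝ) (hbd : ∃ M, ∀ x ∈ B, |J x| ≤ M)
    (husc : UpperSemicontinuousOn J B) :
    ∃ p : ℕ → MvPolynomial (Fin n) ℝ,
      (∀ k, ∀ x ∈ B, J x ≤ MvPolynomial.eval x (p k)) ∧
      Tendsto (fun k => ∫ x in B, |MvPolynomial.eval x (p k) - J x|) atTop (nhds 0) := by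
  obtain ⟨M, hM⟩ := hbd
  obtain ⟨p, hp, hlim⟩ := MvPolynomial.exists_ge_tendsto_of_upperSemicontinuousOn hB husc
    fun x hx => (abs_le.1 (hM x hx)).2
  refine ⟨p, fun k x hx => (hp k x hx).1, ?_⟩
  refine tendsto_setIntegral_abs_sub_of_tendsto (C := 2 * M + 2) hB.measurableSet
    hB.measure_lt_top.ne (fun k => (MvPolynomial.continuous_eval _).aestronglyMeasurable)
    (fun k x hx => ?_) hlim
  obtain ⟨hJp, hpM⟩ := hp k x hx
  rw [abs_of_nonneg (sub_nonneg.2 hJp)]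
  linarith [(abs_le.1 (hM x hx)).1]

theorem stmt_1 {n : ℕ} (B : Set (Fin n → ℝ)) (hB : IsCompact B) (hpos : 0 < volume B)
    (J : (Fin n → ℝ) → ℝ) (hbd : ∃ M, ∀ x ∈ B, |J x| ≤ M)
    (husc : UpperSemicontinuousOn J B) :
    ∃ p : ℕ → MvPolynomial (Fin n) ℝ,
      (∀ k, ∀ x ∈ B, J x ≤ MvPolynomial.eval x (p k)) ∧
      Tendsto (fun k => ∫ x in B, |MvPolynomial.eval x (p k) - J x|) atTop (nhds 0) :=
  stmt_1_general B hB J hbd husc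
end

section
/- Let K ⊂ ℝⁿ × ℝᵐ be compact, B ⊂ ℝⁿ compact with finite positive Lebesgue measure, f : K → ℝ continuous, K_x nonempty for all x ∈ B, and J(x) = max_{y∈K_x} f(x,y). Assume vol({x ∈ B : J(x) = 0}) = 0. Let (p_k) ⊂ ℝ[x] be polynomials with p_k(x) ≥ f(x,y) for all (x,y) ∈ K with x ∈ B, and ∫_B |p_k − J| dx → 0. Define D := {x ∈ B : ∃ y ∈ K_x, f(x,y) ≥ 0} and D_k := {x ∈ B : p_k(x) ≥ 0}. Then D ⊆ D_k for every k, and vol(D_k \ D) → 0 as k → ∞. -/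
open MeasureTheory Set Filter Topology

/-- `Jsup f K x` is the value `sup { f (x, y) : (x, y) ∈ K }`. -/
noncomputable def Jsup {n m : ℕ} (f : (Fin n → ℝ) × (Fin m → ℝ) → ℝ)
    (K : Set ((Fin n → ℝ) × (Fin m → ℝ))) (x : Fin n → ℝ) : ℝ :=
  sSup ((fun y => f (x, y)) '' {y | (x, y) ∈ K})

/-!
Since each fibre `K_x` is compact, the supremum `J x` is attained, so `D = {x ∈ B | 0 ≤ J x}`,
and `J` is measurable because its superlevel sets are projections of compact sets. A point of
`D_k \ D` has `p_k x ≥ 0 > J x`; either `J x ≤ -ε`, and then `|p_k x - J x| ≥ ε`, which happens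
on a set of measure tending to `0` since `p_k → J` in `L¹` and hence in measure; or
`-ε < J x < 0`, and these sets decrease to `∅` inside the finite-measure set `B` as `ε → 0`.
-/

section Slice

variable {X Y : Type*} [TopologicalSpace X] [TopologicalSpace Y] {K : Set (X × Y)}
  {f : X × Y → ℝ}

theorem IsCompact.preimage_prodMk [T1Space X] (hK : IsCompact K) (x : X) :
    IsCompact {y | (x, y) ∈ K} :=
  (IsClosedEmbedding.of_continuous_injective_isClosedMap (by fun_prop)
    (Prod.mk_right_injective x) (isClosedMap_prodMk_left x)).isCompact_preimage hK

theorem le_sSup_image_slice_iff [T1Space X] (hK : IsCompact K) (hf : Continuous f) {x : X}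
    (hx : {y | (x, y) ∈ K}.Nonempty) (a : ℝ) :
    a ≤ sSup ((fun y => f (x, y)) '' {y | (x, y) ∈ K}) ↔ ∃ y, (x, y) ∈ K ∧ a ≤ f (x, y) := by
  rw [← not_iff_not, not_le, (hK.preimage_prodMk x).sSup_lt_iff_of_continuous hx (by fun_prop)]
  simp only [mem_ofPred, not_exists, not_and, not_le]

theorem exists_forall_abs_sSup_image_slice_le [T1Space X] (hK : IsCompact K)
    (hf : Continuous f) : ∃ C, ∀ x, |sSup ((fun y => f (x, y)) '' {y | (x, y) ∈ K})| ≤ C := by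
  obtain ⟨C, hC⟩ := ((hK.image hf).insert 0).isBounded.exists_norm_le
  refine ⟨C, fun x => hC _ ?_⟩
  rcases eq_empty_or_nonempty {y | (x, y) ∈ K} with hx | hx
  · simp [hx]
  · obtain ⟨y, hy, hxy⟩ :=
      ((hK.preimage_prodMk x).image (hf.comp (.prodMk_right x))).sSup_mem (hx.image _)
    exact .inr ⟨(x, y), hy, hxy⟩

theorem measurable_sSup_image_slice [MeasurableSpace X] [OpensMeasurableSpace X] [T2Space X]
    (hK : IsCompact K) (hf : Continuous f) :
    Measurable fun x => sSup ((fun y => f (x, y)) '' {y | (x, y) ∈ K}) := by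
  refine measurable_of_Ici fun a => ?_
  have hlevel : (fun x => sSup ((fun y => f (x, y)) '' {y | (x, y) ∈ K})) ⁻¹' Ici a =
      Prod.fst '' (K ∩ f ⁻¹' Ici a) ∪ (Prod.fst '' K)ᶜ ∩ {_x | a ≤ 0} := by
    ext x
    rcases eq_empty_or_nonempty {y | (x, y) ∈ K} with hx | hx
    -- over an empty fibre the supremum is the junk value `sSup ∅ = 0`
    · simp_all [eq_empty_iff_forall_notMem]
    · have hxK : x ∈ Prod.fst '' K := let ⟨y, hy⟩ := hx; ⟨(x, y), hy, rfl⟩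
      simp [le_sSup_image_slice_iff hK hf hx, hxK]
  rw [hlevel]
  exact ((hK.inter_right (isClosed_Ici.preimage hf)).image continuous_fst).measurableSet.union
    ((hK.image continuous_fst).measurableSet.compl.inter (.const _))

end Slice

section InMeasure

variable {X ι : Type*} [MeasurableSpace X] {μ : Measure X}

theorem tendstoInMeasure_of_tendsto_integral_abs_sub {l : Filter ι} {g : ι → X → ℝ}
    {h : X → ℝ} (hg : ∀ i, Integrable (g i) μ) (hh : Integrable h μ)
    (hgh : Tendsto (fun i => ∫ x, |g i x - h x| ∂μ) l (𝓝 0)) : TendstoInMeasure μ g l h := by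
  refine tendstoInMeasure_of_tendsto_eLpNorm one_ne_zero (fun i => (hg i).aestronglyMeasurable)
    hh.aestronglyMeasurable ?_
  have heq : ∀ i, eLpNorm (g i - h) 1 μ = ENNReal.ofReal (∫ x, |g i x - h x| ∂μ) := fun i => by
    rw [eLpNorm_one_eq_lintegral_enorm, ← ofReal_integral_norm_eq_lintegral_enorm ((hg i).sub hh)]
    rfl
  simpa [heq] using ENNReal.tendsto_ofReal hgh

theorem tendsto_measure_neg_lt_and_lt_zero [IsFiniteMeasure μ] {h : X → ℝ} (hh : Measurable h) :
    Tendsto (fun ε => μ {x | -ε < h x ∧ h x < 0}) (𝓝[>] 0) (𝓝 0) := by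
  have hempty : ⋂ ε > (0 : ℝ), {x | -ε < h x ∧ h x < 0} = ∅ := by
    refine eq_empty_of_forall_notMem fun x hx => ?_
    simp only [mem_iInter] at hx
    linarith [(hx (-h x) (neg_pos.2 (hx 1 one_pos).2)).1]
  have := tendsto_measure_biInter_gt (μ := μ) (a := (0 : ℝ))
    (s := fun ε => {x | -ε < h x ∧ h x < 0})
    (fun ε _ => ((measurableSet_lt measurable_const hh).inter
      (measurableSet_lt hh measurable_const)).nullMeasurableSet)
    (fun _ _ _ hij _ hx => ⟨by linarith [hx.1], hx.2⟩) ⟨1, one_pos, measure_ne_top _ _⟩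
  rwa [hempty, measure_empty] at this

theorem tendsto_measure_nonneg_diff_of_tendstoInMeasure [IsFiniteMeasure μ] {l : Filter ι}
    {g : ι → X → ℝ} {h : X → ℝ} (hh : Measurable h) (hgh : TendstoInMeasure μ g l h) :
    Tendsto (fun i => μ ({x | 0 ≤ g i x} \ {x | 0 ≤ h x})) l (𝓝 0) := by
  refine ENNReal.tendsto_nhds_zero.2 fun δ hδ => ?_
  have hδ2 : 0 < δ / 2 := ENNReal.half_pos hδ.ne'
  obtain ⟨ε, hε_small, hε⟩ := ((ENNReal.tendsto_nhds_zero.1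
    (tendsto_measure_neg_lt_and_lt_zero (μ := μ) hh)) _ hδ2).and self_mem_nhdsWithin |>.exists
  filter_upwards [ENNReal.tendsto_nhds_zero.1 (hgh _ (ENNReal.ofReal_pos.2 hε)) _ hδ2]
    with i hi
  have hcover : {x | 0 ≤ g i x} \ {x | 0 ≤ h x} ⊆
      {x | ENNReal.ofReal ε ≤ edist (g i x) (h x)} ∪ {x | -ε < h x ∧ h x < 0} := by
    intro x ⟨hgx, hhx⟩
    simp only [mem_ofPred, not_le] at hgx hhx
    by_cases hlt : -ε < h x
    · exact .inr ⟨hlt, hhx⟩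
    · refine .inl ?_
      rw [mem_ofPred, edist_dist, Real.dist_eq]
      exact ENNReal.ofReal_le_ofReal (le_abs.2 (.inl (by linarith)))
  calc μ ({x | 0 ≤ g i x} \ {x | 0 ≤ h x})
      ≤ μ {x | ENNReal.ofReal ε ≤ edist (g i x) (h x)} + μ {x | -ε < h x ∧ h x < 0} :=
        (measure_mono hcover).trans (measure_union_le _ _)
    _ ≤ δ / 2 + δ / 2 := add_le_add hi hε_small
    _ = δ := ENNReal.add_halves δ

end InMeasure

theorem stmt_7_general {n m : ℕ} (K : Set ((Fin n → ℝ) × (Fin m → ℝ))) (hK : IsCompact K)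
    (B : Set (Fin n → ℝ)) (hB : IsCompact B)
    (f : (Fin n → ℝ) × (Fin m → ℝ) → ℝ) (hf : Continuous f)
    (hne : ∀ x ∈ B, {y | (x, y) ∈ K}.Nonempty)
    (p : ℕ → MvPolynomial (Fin n) ℝ)
    (hdom : ∀ k, ∀ x ∈ B, ∀ y, (x, y) ∈ K → f (x, y) ≤ MvPolynomial.eval x (p k))
    (hL1 : Tendsto (fun k => ∫ x in B, |MvPolynomial.eval x (p k) - Jsup f K x|)
      atTop (nhds 0)) :
    (∀ k, {x ∈ B | ∃ y, (x, y) ∈ K ∧ 0 ≤ f (x, y)} ⊆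
        {x ∈ B | 0 ≤ MvPolynomial.eval x (p k)}) ∧
      Tendsto (fun k => volume ({x ∈ B | 0 ≤ MvPolynomial.eval x (p k)} \
        {x ∈ B | ∃ y, (x, y) ∈ K ∧ 0 ≤ f (x, y)})) atTop (nhds 0) := by
  have hJ : Measurable (Jsup f K) := measurable_sSup_image_slice hK hf
  have hD : {x ∈ B | ∃ y, (x, y) ∈ K ∧ 0 ≤ f (x, y)} = {x ∈ B | 0 ≤ Jsup f K x} :=
    sep_ext_iff.2 fun x hx => (le_sSup_image_slice_iff hK hf (hne x hx) 0).symm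
  refine ⟨fun k x ⟨hx, y, hy, hfy⟩ => ⟨hx, hfy.trans (hdom k x hx y hy)⟩, ?_⟩
  have : IsFiniteMeasure (volume.restrict B) := isFiniteMeasure_restrict.2 hB.measure_lt_top.ne
  obtain ⟨C, hC⟩ := exists_forall_abs_sSup_image_slice_le hK hf
  have hJint : Integrable (Jsup f K) (volume.restrict B) :=
    .of_bound hJ.aestronglyMeasurable C (ae_of_all _ hC)
  have hpint : ∀ k, Integrable (fun x => MvPolynomial.eval x (p k)) (volume.restrict B) :=
    fun k => (MvPolynomial.continuous_eval (p k)).continuousOn.integrableOn_compact hB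
  have hdiff := tendsto_measure_nonneg_diff_of_tendstoInMeasure hJ
    (tendstoInMeasure_of_tendsto_integral_abs_sub hpint hJint hL1)
  rw [hD]
  refine hdiff.congr fun k => ?_
  rw [Measure.restrict_apply' hB.measurableSet]
  congr 1
  ext x
  simp only [mem_inter_iff, Set.mem_sdiff, mem_ofPred]
  tauto

theorem stmt_7 {n m : ℕ} (K : Set ((Fin n → ℝ) × (Fin m → ℝ))) (hK : IsCompact K)
    (B : Set (Fin n → ℝ)) (hB : IsCompact B) (h0 : 0 < volume B) (hfin : volume B < ⊤)
    (f : (Fin n → ℝ) × (Fin m → ℝ) → ℝ) (hf : Continuous f)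
    (hne : ∀ x ∈ B, {y | (x, y) ∈ K}.Nonempty)
    (hzero : volume {x ∈ B | Jsup f K x = 0} = 0)
    (p : ℕ → MvPolynomial (Fin n) ℝ)
    (hdom : ∀ k, ∀ x ∈ B, ∀ y, (x, y) ∈ K → f (x, y) ≤ MvPolynomial.eval x (p k))
    (hL1 : Tendsto (fun k => ∫ x in B, |MvPolynomial.eval x (p k) - Jsup f K x|)
      atTop (nhds 0))
    (hpzero : ∀ k, volume {x ∈ B | MvPolynomial.eval x (p k) = 0} = 0) :
    (∀ k, {x ∈ B | ∃ y, (x, y) ∈ K ∧ 0 ≤ f (x, y)} ⊆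
        {x ∈ B | 0 ≤ MvPolynomial.eval x (p k)}) ∧
      Tendsto (fun k => volume ({x ∈ B | 0 ≤ MvPolynomial.eval x (p k)} \
        {x ∈ B | ∃ y, (x, y) ∈ K ∧ 0 ≤ f (x, y)})) atTop (nhds 0) :=
  stmt_7_general K hK B hB f hf hne p hdom hL1
end

section
/- Let z = (z_{αβ}) be a sequence indexed by multi-indices of degree ≤ 2k in n+m variables satisfying: L_z(1) = 1, the localizing matrices associated with g(y) = 1 − ‖y‖² and θ_i(x) = 1 − x_i² (i = 1,…,n) of order k−1 are positive semidefinite, and the moment matrix M_k(z) ⪰ 0. Then L_z(y_ℓ^{2k}) ≤ 1 for ℓ = 1,…,m and L_z(x_i^{2k}) ≤ 1 for i = 1,…,n. -/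
/-!
If `L(u² g) ≥ 0` for `g = 1 - ∑ₜ fₜ²` and `L((u fₜ)²) ≥ 0` for every `t`, then
`L(u² f_ℓ²) ≤ L(u²)`. Taking `u = x^j` with `x` one of the variables appearing in `g`
(the ball constraint for `y`, or the box constraint `1 - xᵢ²` for `xᵢ`) gives
`L(x^{2j+2}) ≤ L(x^{2j})` for `j < k`, so `L(x^{2k}) ≤ L(1) = 1`.
-/

open MvPolynomial

theorem map_mul_sq_le_of_map_sq_mul_one_sub_sum_sq_nonneg {A ι : Type*} [CommRing A]
    [Module ℝ A] (L : A →ₗ[ℝ] ℝ) (s : Finset ι) (f : ι → A) (u : A)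
    (hloc : 0 ≤ L (u ^ 2 * (1 - ∑ t ∈ s, f t ^ 2))) (hsq : ∀ t ∈ s, 0 ≤ L ((u * f t) ^ 2))
    {ℓ : ι} (hℓ : ℓ ∈ s) : L ((u * f ℓ) ^ 2) ≤ L (u ^ 2) := by
  have hexpand : u ^ 2 * (1 - ∑ t ∈ s, f t ^ 2) = u ^ 2 - ∑ t ∈ s, (u * f t) ^ 2 := by
    simp only [mul_sub, mul_one, Finset.mul_sum, mul_pow]
  rw [hexpand, map_sub, map_sum, sub_nonneg] at hloc
  exact (Finset.single_le_sum hsq hℓ).trans hloc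

theorem map_X_pow_two_mul_le_one {σ ι : Type*} {k : ℕ} (L : MvPolynomial σ ℝ →ₗ[ℝ] ℝ)
    (hone : L 1 = 1) (hmom : ∀ u : MvPolynomial σ ℝ, u.totalDegree ≤ k → 0 ≤ L (u ^ 2))
    (e : ι → σ) (s : Finset ι)
    (hloc : ∀ u : MvPolynomial σ ℝ, u.totalDegree ≤ k - 1 →
      0 ≤ L (u ^ 2 * (1 - ∑ t ∈ s, X (e t) ^ 2)))
    {ℓ : ι} (hℓ : ℓ ∈ s) : L (X (e ℓ) ^ (2 * k)) ≤ 1 := by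
  suffices h : ∀ j ≤ k, L (X (e ℓ) ^ (2 * j)) ≤ 1 from h k le_rfl
  intro j
  induction j with
  | zero => simp [hone]
  | succ j ih =>
    intro hj
    have hdeg : (X (e ℓ) ^ j : MvPolynomial σ ℝ).totalDegree ≤ k - 1 := by
      rw [totalDegree_X_pow]; omega
    have hsq : ∀ t ∈ s, 0 ≤ L ((X (e ℓ) ^ j * X (e t)) ^ 2) := fun t _ =>
      hmom _ <| (totalDegree_mul _ _).trans <| by
        rw [totalDegree_X_pow, totalDegree_X]; omega
    have hstep := map_mul_sq_le_of_map_sq_mul_one_sub_sum_sq_nonneg L s (fun t => X (e t))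
      _ (hloc _ hdeg) hsq hℓ
    rw [← pow_succ, ← pow_mul, ← pow_mul, mul_comm (j + 1), mul_comm j] at hstep
    exact hstep.trans (ih (by omega))

theorem stmt_18 {n m : ℕ} (k : ℕ)
    (L : MvPolynomial (Fin n ⊕ Fin m) ℝ →ₗ[ℝ] ℝ)
    (hone : L 1 = 1)
    (hmom : ∀ u : MvPolynomial (Fin n ⊕ Fin m) ℝ, u.totalDegree ≤ k → 0 ≤ L (u ^ 2))
    (hg : ∀ u : MvPolynomial (Fin n ⊕ Fin m) ℝ, u.totalDegree ≤ k - 1 →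
      0 ≤ L (u ^ 2 * (1 - ∑ ℓ : Fin m, (X (Sum.inr ℓ)) ^ 2)))
    (hθ : ∀ i : Fin n, ∀ u : MvPolynomial (Fin n ⊕ Fin m) ℝ, u.totalDegree ≤ k - 1 →
      0 ≤ L (u ^ 2 * (1 - (X (Sum.inl i)) ^ 2))) :
    (∀ ℓ : Fin m, L ((X (Sum.inr ℓ) : MvPolynomial (Fin n ⊕ Fin m) ℝ) ^ (2 * k)) ≤ 1) ∧
      (∀ i : Fin n, L ((X (Sum.inl i) : MvPolynomial (Fin n ⊕ Fin m) ℝ) ^ (2 * k)) ≤ 1) :=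
  ⟨fun ℓ => map_X_pow_two_mul_le_one L hone hmom Sum.inr Finset.univ hg (Finset.mem_univ ℓ),
    fun i => map_X_pow_two_mul_le_one L hone hmom Sum.inl {i}
      (by simpa only [Finset.sum_singleton] using hθ i) (Finset.mem_singleton_self i)⟩
end
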